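/- arXiv:2512.13631 — 3 statements merged into one kernel-verified Lean document; each statement's English description precedes it below -/
import Mathlib

section
/- Let n ≥ 3 be odd, let θ_j = 2πj/n for j = 0,...,n−1, and let D be the n×n Fourier spectral differentiation matrix. For every integer k with |k| ≤ (n−1)/2, the vector v with components v_j = exp(i k θ_j) satisfies D v = i k · v; i.e., sampled Fourier modes of resolvable wavenumber are eigenvectors of D with eigenvalue i k. -/
open Real Complex

/-- The `n × n` Fourier spectral differentiation matrix (over `ℂ`). -/
noncomputable def specDC (n : ℕ) : Matrix (Fin n) (Fin n) ℂ :=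
  Matrix.of fun j k =>
    if j = k then 0
    else ((-1 : ℂ) ^ ((j : ℤ) - (k : ℤ)) / 2) *
      ((Real.sin (((j : ℝ) - (k : ℝ)) * π / n) : ℂ))⁻¹

/-!
Write `n = 2p + 1` and `ω = exp (2πi/n)`. Since `(-1)^d = exp (iπd)`, the entry `D j l` equals
`i x^(p+1) / (x - 1)` with `x = ω^(j-l)`; all sums below run over the `n`-th roots of unity `x`,
including `x = 1`, whose term vanishes because `x / 0 = 0` (this also covers the diagonal of `D`).
Reindexing over `x`, `(D v)_j = i ω^(kj) T(p + 1 - k)` with `T(b) = ∑ x^b / (x - 1)`.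
Pairing `x` with `x⁻¹` gives `2 T(0) = 1 - n`, and `T(b + 1) - T(b) = ∑_{x ≠ 1} x^b` is `n - 1`
for `b = 0` and `-1` for `0 < b < n`; hence `T(b) = (n + 1)/2 - b` for `1 ≤ b ≤ n`, and
`T(p + 1 - k) = k`.
-/

open Finset

lemma div_pow_mul_zpow {K : Type*} [Field K] {y z : K} (hy : y ≠ 0) (hz : z ≠ 0) (a : ℕ)
    (k : ℤ) : (y / z) ^ a * z ^ k = y ^ k * (y / z) ^ ((a : ℤ) - k) := by
  rw [zpow_sub₀ (div_ne_zero hy hz), zpow_natCast, div_zpow]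
  field_simp

namespace IsPrimitiveRoot

variable {K : Type*} [Field K] {n : ℕ} {ω : K}

lemma sum_pow_finVal_pow_eq_zero (hω : IsPrimitiveRoot ω n) {i : ℕ} (hi : ¬ n ∣ i) :
    ∑ m : Fin n, (ω ^ (m : ℕ)) ^ i = 0 := by
  simp_rw [← pow_mul, mul_comm _ i, pow_mul]
  rw [Fin.sum_univ_eq_sum_range (fun m => (ω ^ i) ^ m),
    geom_sum_eq (mt (hω.pow_eq_one_iff_dvd i).1 hi), ← pow_mul, mul_comm, pow_mul,
    hω.pow_eq_one, one_pow, sub_self, zero_div]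

variable [NeZero n]

lemma pow_finVal_sub (hω : IsPrimitiveRoot ω n) (a b : Fin n) :
    ω ^ ((a - b : Fin n) : ℕ) = ω ^ (a : ℕ) / ω ^ (b : ℕ) := by
  have hb : ω ^ (n - b : ℕ) * ω ^ (b : ℕ) = 1 := by
    rw [← pow_add, Nat.sub_add_cancel b.is_lt.le, hω.pow_eq_one]
  rw [Fin.val_sub, ← pow_eq_pow_mod _ hω.pow_eq_one, pow_add,
    eq_div_iff (pow_ne_zero _ (hω.ne_zero (NeZero.ne n)))]
  linear_combination ω ^ (a : ℕ) * hb

lemma pow_finVal_eq_one_iff (hω : IsPrimitiveRoot ω n) {m : Fin n} :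
    ω ^ (m : ℕ) = 1 ↔ m = 0 := by
  rw [hω.pow_eq_one_iff_dvd, Fin.ext_iff, Fin.val_zero]
  exact ⟨fun h => Nat.eq_zero_of_dvd_of_lt h m.is_lt, fun h => h ▸ dvd_zero n⟩

lemma sum_comp_div_pow_finVal (hω : IsPrimitiveRoot ω n) (j : Fin n) (f : K → K) :
    ∑ l : Fin n, f (ω ^ (j : ℕ) / ω ^ (l : ℕ)) = ∑ m : Fin n, f (ω ^ (m : ℕ)) := by
  simp_rw [← hω.pow_finVal_sub]
  exact (Equiv.subLeft j).sum_comp (fun m => f (ω ^ (m : ℕ)))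

/-- `(x - 1) * (x - 1)⁻¹` is the indicator function of the nontrivial `n`-th roots of unity. -/
lemma sum_mul_sub_one_mul_inv (hω : IsPrimitiveRoot ω n) (f : K → K) :
    ∑ m : Fin n, f (ω ^ (m : ℕ)) * ((ω ^ (m : ℕ) - 1) * (ω ^ (m : ℕ) - 1)⁻¹)
      = ∑ m : Fin n, f (ω ^ (m : ℕ)) - f 1 := by
  rw [← add_sum_erase _ _ (mem_univ 0), ← add_sum_erase _ _ (mem_univ 0)]
  have hne : ∀ m ∈ univ.erase (0 : Fin n), ω ^ (m : ℕ) - 1 ≠ 0 := fun m hm =>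
    sub_ne_zero.2 (mt hω.pow_finVal_eq_one_iff.1 (ne_of_mem_erase hm))
  simp only [Fin.val_zero, pow_zero, sub_self, inv_zero, mul_zero, zero_add, add_sub_cancel_left]
  exact sum_congr rfl fun m hm => by rw [mul_inv_cancel₀ (hne m hm), mul_one]

lemma sum_pow_succ_div_sub_one (hω : IsPrimitiveRoot ω n) (b : ℕ) :
    ∑ m : Fin n, (ω ^ (m : ℕ)) ^ (b + 1) / (ω ^ (m : ℕ) - 1)
      = ∑ m : Fin n, (ω ^ (m : ℕ)) ^ b / (ω ^ (m : ℕ) - 1)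
        + ∑ m : Fin n, (ω ^ (m : ℕ)) ^ b - 1 := by
  have key := hω.sum_mul_sub_one_mul_inv (· ^ b)
  simp only [one_pow] at key
  rw [add_sub_assoc, ← key, ← sum_add_distrib]
  exact sum_congr rfl fun m _ => by ring

lemma two_mul_sum_inv_sub_one (hω : IsPrimitiveRoot ω n) :
    2 * ∑ m : Fin n, (ω ^ (m : ℕ) - 1)⁻¹ = 1 - n := by
  have hpair : ∀ x : K, x ≠ 0 → (x - 1)⁻¹ + (x⁻¹ - 1)⁻¹ = -((x - 1) * (x - 1)⁻¹) := by
    intro x hx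
    by_cases h1 : x = 1
    · simp [h1]
    · have : x - 1 ≠ 0 := sub_ne_zero.2 h1
      have : 1 - x ≠ 0 := sub_ne_zero.2 (Ne.symm h1)
      field_simp
      ring
  have hreflect := hω.sum_comp_div_pow_finVal 0 (fun x => (x - 1)⁻¹)
  have hcount := hω.sum_mul_sub_one_mul_inv (fun _ => 1)
  simp only [Fin.val_zero, pow_zero, one_div, one_mul, sum_const, card_univ, Fintype.card_fin,
    nsmul_eq_mul, mul_one] at hreflect hcount
  rw [two_mul]
  nth_rewrite 2 [← hreflect]
  rw [← sum_add_distrib,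
    sum_congr rfl fun m _ => hpair _ (pow_ne_zero _ (hω.ne_zero (NeZero.ne n))),
    sum_neg_distrib, hcount]
  ring

theorem two_mul_sum_pow_div_sub_one (hω : IsPrimitiveRoot ω n) {b : ℕ} (hb : 1 ≤ b)
    (hbn : b ≤ n) :
    2 * ∑ m : Fin n, (ω ^ (m : ℕ)) ^ b / (ω ^ (m : ℕ) - 1) = n + 1 - 2 * b := by
  obtain ⟨t, rfl⟩ := Nat.exists_eq_add_of_le' hb
  induction t with
  | zero =>
    have h := hω.two_mul_sum_inv_sub_one
    rw [hω.sum_pow_succ_div_sub_one]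
    simp only [pow_zero, one_div, sum_const, card_univ, Fintype.card_fin, nsmul_eq_mul, mul_one]
    push_cast
    linear_combination h
  | succ t ih =>
    rw [hω.sum_pow_succ_div_sub_one, hω.sum_pow_finVal_pow_eq_zero, add_zero, mul_sub,
      ih (by omega) (by omega)]
    · push_cast
      ring
    · exact Nat.not_dvd_of_pos_of_lt (by omega) (by omega)

lemma sum_div_pow_div_sub_one_mul_zpow (hω : IsPrimitiveRoot ω n) (j : Fin n) {a b : ℕ} {k : ℤ}
    (hb : (b : ℤ) = a - k) :
    ∑ l : Fin n, (ω ^ (j : ℕ) / ω ^ (l : ℕ)) ^ a / (ω ^ (j : ℕ) / ω ^ (l : ℕ) - 1) * (ω ^ (l : ℕ)) ^ k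
      = (ω ^ (j : ℕ)) ^ k * ∑ m : Fin n, (ω ^ (m : ℕ)) ^ b / (ω ^ (m : ℕ) - 1) := by
  have hω0 : ∀ m : ℕ, ω ^ m ≠ 0 := fun m => pow_ne_zero m (hω.ne_zero (NeZero.ne n))
  rw [← hω.sum_comp_div_pow_finVal j (fun x => x ^ b / (x - 1)), mul_sum]
  refine sum_congr rfl fun l _ => ?_
  rw [← zpow_natCast _ b, hb]
  linear_combination (ω ^ (j : ℕ) / ω ^ (l : ℕ) - 1)⁻¹ *
    div_pow_mul_zpow (hω0 (j : ℕ)) (hω0 (l : ℕ)) a k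

end IsPrimitiveRoot

namespace Complex

lemma inv_sin_eq (z : ℂ) : (sin z)⁻¹ = 2 * I * exp (z * I) / (exp (z * I) ^ 2 - 1) := by
  have he := exp_ne_zero (z * I)
  rw [sin, neg_mul, exp_neg]
  by_cases h : exp (z * I) ^ 2 = 1
  · have : (exp (z * I))⁻¹ - exp (z * I) = 0 := by
      field_simp
      linear_combination -h
    simp [h, this]
  · have : exp (z * I) ^ 2 - 1 ≠ 0 := sub_ne_zero.2 h
    field_simp
    linear_combination (exp (z * I) ^ 2 - 1) * I_sq

lemma exp_I_mul_mul_two_pi_div (n j : ℕ) (k : ℤ) :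
    exp (I * k * (2 * π * j / n)) = (exp (2 * π * I / n) ^ j) ^ k := by
  rw [← exp_nat_mul, ← exp_int_mul]
  congr 1
  ring

end Complex

lemma specDC_apply_of_eq_two_mul_add_one {n p : ℕ} (hn : n = 2 * p + 1) (j l : Fin n) :
    specDC n j l = I * ((exp (2 * π * I / n) ^ (j : ℕ) / exp (2 * π * I / n) ^ (l : ℕ)) ^ (p + 1)
      / (exp (2 * π * I / n) ^ (j : ℕ) / exp (2 * π * I / n) ^ (l : ℕ) - 1)) := by
  by_cases hjl : j = l
  · simp [specDC, hjl]
  have hn0 : (n : ℂ) ≠ 0 := Nat.cast_ne_zero.2 (by omega)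
  set η := exp (↑(((j : ℝ) - l) * π / n) * I)
  have hratio : exp (2 * π * I / n) ^ (j : ℕ) / exp (2 * π * I / n) ^ (l : ℕ) = η ^ 2 := by
    rw [← Complex.exp_nat_mul, ← Complex.exp_nat_mul, ← Complex.exp_sub, ← Complex.exp_nat_mul]
    congr 1
    push_cast
    ring
  have hsign : (-1 : ℂ) ^ ((j : ℤ) - l) = η ^ (2 * p + 1) := by
    rw [← hn, ← exp_pi_mul_I, ← exp_int_mul, ← Complex.exp_nat_mul]
    congr 1
    push_cast
    field_simp
  simp only [specDC, Matrix.of_apply, if_neg hjl]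
  rw [ofReal_sin, inv_sin_eq, hsign, hratio]
  ring

theorem stmt_6_general (n : ℕ) (hodd : Odd n)
    (k : ℤ) (hk : |k| ≤ ((n : ℤ) - 1) / 2) :
    (specDC n).mulVec
        (fun j : Fin n => Complex.exp (Complex.I * k * (2 * π * j / n)))
      = (Complex.I * k) •
        (fun j : Fin n => Complex.exp (Complex.I * k * (2 * π * j / n))) := by
  obtain ⟨p, hp⟩ := hodd
  have : NeZero n := ⟨by omega⟩
  have hω : IsPrimitiveRoot (exp (2 * π * I / n)) n := isPrimitiveRoot_exp n (NeZero.ne n)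
  have hkp := abs_le.mp hk
  obtain ⟨b, hb⟩ : ∃ b : ℕ, (b : ℤ) = (p + 1 : ℕ) - k := ⟨_, Int.toNat_of_nonneg (by omega)⟩
  have hsum := hω.two_mul_sum_pow_div_sub_one (b := b) (by omega) (by omega)
  have hbC : (b : ℂ) = p + 1 - k := by exact_mod_cast hb
  have hnC : (n : ℂ) = 2 * p + 1 := by exact_mod_cast hp
  funext j
  simp only [Matrix.mulVec, dotProduct, Pi.smul_apply, smul_eq_mul, exp_I_mul_mul_two_pi_div,
    specDC_apply_of_eq_two_mul_add_one hp]
  simp only [mul_assoc I, ← mul_sum]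
  rw [hω.sum_div_pow_div_sub_one_mul_zpow j hb]
  linear_combination (exp (2 * π * I / n) ^ (j : ℕ)) ^ k * I / 2 * (hsum + hnC - 2 * hbC)

theorem stmt_6 (n : ℕ) (hodd : Odd n) (hn : 3 ≤ n)
    (k : ℤ) (hk : |k| ≤ ((n : ℤ) - 1) / 2) :
    (specDC n).mulVec
        (fun j : Fin n => Complex.exp (Complex.I * k * (2 * π * j / n)))
      = (Complex.I * k) •
        (fun j : Fin n => Complex.exp (Complex.I * k * (2 * π * j / n))) :=
  stmt_6_general n hodd k hk
end

section
/- Let ω₁, ω₂ > 0 be rationally independent and let D₁, D₂ be Fourier spectral differentiation matrices of odd sizes n₁, n₂ ≥ 3. Then the kernel of the Kronecker-sum operator L = ω₁ (I_{n₂} ⊗ D₁) + ω₂ (D₂ ⊗ I_{n₁}) on ℂ^{n₁n₂} is exactly one-dimensional, spanned by the all-ones vector. -/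
open Real Matrix Kronecker

/-!
For `n = 2s + 1` and `ζ = exp(2πi/n)`, writing `(-1)^d / (2 sin(πd/n)) = i x^(-s) / (x - 1)` with
`x = ζ^d` and summing the derivative of a geometric series gives the spectral decomposition
`specDC n j m = (i/n) ∑_{|k| ≤ s} k ζ^(k(j - m))`. Orthogonality of the Fourier modes
`j ↦ ζ^(kj)`, `|k| ≤ s`, makes them eigenvectors of `D = specDC n` with eigenvalue `ik`, and
since `Dᵀ = -D` also left eigenvectors with eigenvalue `-ik`. Pairing a kernel vector `v` of the
Kronecker sum with the tensor mode of frequency `(k₂, k₁)` therefore gives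
`-i(ω₁k₁ + ω₂k₂) ⟨mode, v⟩ = 0`: by rational independence every Fourier coefficient of `v` but
the zeroth vanishes, and Fourier inversion shows that `v` is constant. Conversely, constants are
the zero mode, which has eigenvalue `0`.
-/

open Finset

theorem sum_Icc_neg_eq_sum_range {M : Type*} [AddCommMonoid M] (s : ℕ) (f : ℤ → M) :
    ∑ k ∈ Icc (-(s : ℤ)) s, f k = ∑ j ∈ range (2 * s + 1), f (j - s) := by
  refine sum_nbij' (fun k => (k + s).toNat) (fun j => (j : ℤ) - s) ?_ ?_ ?_ ?_
    fun k hk => congrArg f ?_ <;> intros <;> simp_all <;> omega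

theorem sum_Icc_neg_intCast {R : Type*} [Ring R] (s : ℕ) :
    ∑ k ∈ Icc (-(s : ℤ)) s, (k : R) = 0 := by
  have h : ∑ k ∈ Icc (-(s : ℤ)) s, k = ∑ k ∈ Icc (-(s : ℤ)) s, -k :=
    sum_equiv (Equiv.neg ℤ) (by simp; omega) (by simp)
  rw [sum_neg_distrib] at h
  rw [← Int.cast_sum, show ∑ k ∈ Icc (-(s : ℤ)) s, k = 0 by linarith, Int.cast_zero]

theorem sub_one_mul_sum_range_mul_pow {R : Type*} [CommRing R] (x : R) (n : ℕ) :
    (x - 1) * ∑ j ∈ range n, (j : R) * x ^ j = n * x ^ n - ∑ j ∈ range n, x ^ (j + 1) := by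
  induction n with
  | zero => simp
  | succ n ih =>
    rw [sum_range_succ, sum_range_succ, mul_add, ih]
    push_cast
    ring

section GeomSum

variable {K : Type*} [Field K] {x : K}

theorem geom_sum_eq_ite_of_pow_eq_one [DecidableEq K] {n : ℕ} (hx : x ^ n = 1) :
    ∑ j ∈ range n, x ^ j = if x = 1 then (n : K) else 0 := by
  split_ifs with h
  · simp [h]
  · rw [geom_sum_eq h, hx, sub_self, zero_div]

theorem zpow_sub_natCast_eq_mul (hx : x ≠ 0) (j s : ℕ) :
    x ^ ((j : ℤ) - s) = x ^ (-(s : ℤ)) * x ^ j := by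
  rw [sub_eq_neg_add, zpow_add₀ hx, zpow_natCast]

theorem sum_Icc_neg_zpow [DecidableEq K] {s : ℕ} (hx : x ^ (2 * s + 1) = 1) :
    ∑ k ∈ Icc (-(s : ℤ)) s, x ^ k = if x = 1 then ((2 * s + 1 : ℕ) : K) else 0 := by
  have hx0 : x ≠ 0 := by rintro rfl; simp at hx
  simp_rw [sum_Icc_neg_eq_sum_range, zpow_sub_natCast_eq_mul hx0, ← mul_sum,
    geom_sum_eq_ite_of_pow_eq_one hx]
  split_ifs with h <;> simp [h]

theorem sub_one_mul_sum_Icc_neg_mul_zpow {s : ℕ} (hx : x ^ (2 * s + 1) = 1) (hx1 : x ≠ 1) :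
    (x - 1) * ∑ k ∈ Icc (-(s : ℤ)) s, (k : K) * x ^ k = (2 * s + 1 : ℕ) * x ^ (-(s : ℤ)) := by
  classical
  have hx0 : x ≠ 0 := by rintro rfl; simp at hx
  have hgeom : ∑ j ∈ range (2 * s + 1), x ^ j = 0 := by
    simp [geom_sum_eq_ite_of_pow_eq_one hx, hx1]
  have hshift : ∑ k ∈ Icc (-(s : ℤ)) s, (k : K) * x ^ k
      = x ^ (-(s : ℤ)) * ∑ j ∈ range (2 * s + 1), (j : K) * x ^ j := by
    calc ∑ k ∈ Icc (-(s : ℤ)) s, (k : K) * x ^ k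
        = x ^ (-(s : ℤ)) * ∑ j ∈ range (2 * s + 1), (j : K) * x ^ j
          - s * x ^ (-(s : ℤ)) * ∑ j ∈ range (2 * s + 1), x ^ j := by
          simp_rw [sum_Icc_neg_eq_sum_range, zpow_sub_natCast_eq_mul hx0, mul_sum,
            ← sum_sub_distrib]
          exact sum_congr rfl fun j _ => by push_cast; ring
      _ = _ := by rw [hgeom]; ring
  rw [hshift, mul_left_comm, sub_one_mul_sum_range_mul_pow, hx]
  simp_rw [pow_succ, ← sum_mul, hgeom]
  ring

end GeomSum

section Kronecker

variable {R ι ι' κ κ' : Type*} [CommSemiring R] [Fintype ι] [Fintype κ]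

theorem kronecker_mulVec_mul (B : Matrix κ' κ R) (A : Matrix ι' ι R) (y : κ → R) (x : ι → R) :
    (B ⊗ₖ A) *ᵥ (fun m => y m.1 * x m.2) = fun p => (B *ᵥ y) p.1 * (A *ᵥ x) p.2 := by
  funext p
  simp only [mulVec, dotProduct, kroneckerMap_apply, Fintype.sum_prod_type, sum_mul_sum]
  exact sum_congr rfl fun _ _ => sum_congr rfl fun _ _ => by ring

theorem vecMul_kronecker_mul (B : Matrix κ κ' R) (A : Matrix ι ι' R) (y : κ → R) (x : ι → R) :
    (fun m => y m.1 * x m.2) ᵥ* (B ⊗ₖ A) = fun p => (y ᵥ* B) p.1 * (x ᵥ* A) p.2 := by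
  funext p
  simp only [vecMul, dotProduct, kroneckerMap_apply, Fintype.sum_prod_type, sum_mul_sum]
  exact sum_congr rfl fun _ _ => sum_congr rfl fun _ _ => by ring

variable [DecidableEq ι] [DecidableEq κ] {A : Matrix ι ι R} {B : Matrix κ κ R} {x : ι → R}
  {y : κ → R} {a b : R}

theorem kroneckerSum_mulVec_mul_of_mulVec_eq_smul (c₁ c₂ : R) (hx : A *ᵥ x = a • x)
    (hy : B *ᵥ y = b • y) :
    (c₁ • ((1 : Matrix κ κ R) ⊗ₖ A) + c₂ • (B ⊗ₖ (1 : Matrix ι ι R))) *ᵥ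
        (fun m => y m.1 * x m.2) = (c₁ * a + c₂ * b) • fun m => y m.1 * x m.2 := by
  rw [add_mulVec, smul_mulVec, smul_mulVec, kronecker_mulVec_mul,
    kronecker_mulVec_mul, hx, hy, one_mulVec, one_mulVec]
  funext m
  simp only [Pi.add_apply, Pi.smul_apply, smul_eq_mul]
  ring

theorem mul_vecMul_kroneckerSum_of_vecMul_eq_smul (c₁ c₂ : R) (hx : x ᵥ* A = a • x)
    (hy : y ᵥ* B = b • y) :
    (fun m => y m.1 * x m.2) ᵥ*
        (c₁ • ((1 : Matrix κ κ R) ⊗ₖ A) + c₂ • (B ⊗ₖ (1 : Matrix ι ι R)))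
      = (c₁ * a + c₂ * b) • fun m => y m.1 * x m.2 := by
  rw [vecMul_add, vecMul_smul, vecMul_smul, vecMul_kronecker_mul,
    vecMul_kronecker_mul, hx, hy, vecMul_one, vecMul_one]
  funext m
  simp only [Pi.add_apply, Pi.smul_apply, smul_eq_mul]
  ring

end Kronecker

theorem dotProduct_eq_zero_of_vecMul_eq_smul {R ι : Type*} [Semiring R] [NoZeroDivisors R]
    [Fintype ι] {M : Matrix ι ι R} {x v : ι → R} {c : R} (hx : x ᵥ* M = c • x) (hc : c ≠ 0)
    (hv : M *ᵥ v = 0) : x ⬝ᵥ v = 0 := by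
  have : c * (x ⬝ᵥ v) = 0 := by
    rw [← smul_eq_mul, ← smul_dotProduct, ← hx, ← dotProduct_mulVec, hv, dotProduct_zero]
  exact (mul_eq_zero.1 this).resolve_left hc

theorem sum_product_mul_mul_eq_ite {R ι ι' κ κ' : Type*} [CommSemiring R] [DecidableEq ι]
    [DecidableEq ι'] (K : Finset κ) (K' : Finset κ') (u w : κ → ι → R) (u' w' : κ' → ι' → R)
    {N N' : R} (h : ∀ p m, ∑ k ∈ K, u k p * w k m = if p = m then N else 0)
    (h' : ∀ p m, ∑ k ∈ K', u' k p * w' k m = if p = m then N' else 0) (p m : ι' × ι) :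
    ∑ k ∈ K' ×ˢ K, u' k.1 p.1 * u k.2 p.2 * (w' k.1 m.1 * w k.2 m.2)
      = if p = m then N' * N else 0 := by
  rw [sum_product]
  calc ∑ k' ∈ K', ∑ k ∈ K, u' k' p.1 * u k p.2 * (w' k' m.1 * w k m.2)
      = (∑ k' ∈ K', u' k' p.1 * w' k' m.1) * ∑ k ∈ K, u k p.2 * w k m.2 := by
        rw [sum_mul_sum]
        exact sum_congr rfl fun _ _ => sum_congr rfl fun _ _ => by ring
    _ = _ := by
        rw [h, h']
        by_cases h₁ : p.1 = m.1 <;> by_cases h₂ : p.2 = m.2 <;> simp [h₁, h₂, Prod.ext_iff]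

theorem eq_inv_mul_sum_mul_dotProduct {𝕜 ι κ : Type*} [Field 𝕜] [Fintype ι] [DecidableEq ι]
    (K : Finset κ) (u w : κ → ι → 𝕜) {N : 𝕜} (hN : N ≠ 0)
    (hcompl : ∀ p m, ∑ k ∈ K, u k p * w k m = if p = m then N else 0) (v : ι → 𝕜) (p : ι) :
    v p = N⁻¹ * ∑ k ∈ K, u k p * (w k ⬝ᵥ v) := by
  rw [eq_inv_mul_iff_mul_eq₀ hN]
  simp only [dotProduct, mul_sum]
  rw [sum_comm]
  simp_rw [← mul_assoc, ← sum_mul, hcompl, ite_mul, zero_mul, sum_ite_eq, mem_univ, if_true]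

theorem Fin.intCast_dvd_val_sub_val_iff {n : ℕ} (p m : Fin n) :
    (n : ℤ) ∣ (m : ℤ) - p ↔ p = m := by
  refine ⟨fun h => ?_, by rintro rfl; simp⟩
  have := Int.eq_zero_of_abs_lt_dvd h (by rw [abs_lt]; omega)
  omega

theorem intCast_dvd_sub_iff_of_mem_Icc {s : ℕ} {k k' : ℤ} (hk : k ∈ Icc (-(s : ℤ)) s)
    (hk' : k' ∈ Icc (-(s : ℤ)) s) : ((2 * s + 1 : ℕ) : ℤ) ∣ k - k' ↔ k' = k := by
  rw [mem_Icc] at hk hk'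
  refine ⟨fun h => ?_, by rintro rfl; simp⟩
  have := Int.eq_zero_of_abs_lt_dvd h (by rw [abs_lt]; omega)
  omega

noncomputable def unitRoot (n : ℕ) : ℂ := Complex.exp (2 * π * Complex.I / n)

noncomputable def fourierVec (n : ℕ) (k : ℤ) : Fin n → ℂ := fun j => unitRoot n ^ (k * j)

theorem isPrimitiveRoot_unitRoot {n : ℕ} (hn : n ≠ 0) : IsPrimitiveRoot (unitRoot n) n :=
  Complex.isPrimitiveRoot_exp n hn

theorem unitRoot_ne_zero (n : ℕ) : unitRoot n ≠ 0 := Complex.exp_ne_zero _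

theorem unitRoot_zpow_pow_self (n : ℕ) (d : ℤ) : (unitRoot n ^ d) ^ n = 1 := by
  rcases eq_or_ne n 0 with rfl | hn
  · simp
  rw [← zpow_natCast, ← _root_.zpow_mul, mul_comm, _root_.zpow_mul, zpow_natCast,
    (isPrimitiveRoot_unitRoot hn).pow_eq_one, _root_.one_zpow]

theorem fourierVec_zero (n : ℕ) : fourierVec n 0 = fun _ => 1 := by
  funext j
  simp [fourierVec]

theorem specDC_transpose (n : ℕ) : (specDC n)ᵀ = -specDC n := by
  ext j m
  rw [transpose_apply, neg_apply]
  simp only [specDC, of_apply, eq_comm (a := m)]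
  split_ifs
  · simp
  · have hsign : (-1 : ℂ) ^ ((m : ℤ) - j) = (-1) ^ ((j : ℤ) - m) := by
      rw [← neg_sub, _root_.zpow_neg, ← _root_.inv_zpow, inv_neg_one]
    have hsin : Real.sin (((m : ℝ) - j) * π / n) = -Real.sin (((j : ℝ) - m) * π / n) := by
      rw [← Real.sin_neg]; ring_nf
    rw [hsign, hsin]
    push_cast
    rw [inv_neg]
    ring

section OddSize

variable {n s : ℕ}

theorem sum_Icc_fourierVec_neg_mul_fourierVec (hn : n = 2 * s + 1) (p m : Fin n) :
    ∑ k ∈ Icc (-(s : ℤ)) s, fourierVec n (-k) p * fourierVec n k m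
      = if p = m then (n : ℂ) else 0 := by
  classical
  have hn0 : n ≠ 0 := by omega
  have hterm : ∀ k : ℤ, fourierVec n (-k) p * fourierVec n k m
      = (unitRoot n ^ ((m : ℤ) - p)) ^ k := by
    intro k
    simp only [fourierVec, ← zpow_add₀ (unitRoot_ne_zero n), ← _root_.zpow_mul]
    ring_nf
  have hxn : (unitRoot n ^ ((m : ℤ) - p)) ^ (2 * s + 1) = 1 := by
    rw [← hn]; exact unitRoot_zpow_pow_self n _
  simp_rw [hterm, sum_Icc_neg_zpow hxn, ← hn, (isPrimitiveRoot_unitRoot hn0).zpow_eq_one_iff_dvd,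
    Fin.intCast_dvd_val_sub_val_iff]

theorem sum_univ_fourierVec_neg_mul_fourierVec (hn : n = 2 * s + 1) {k k' : ℤ}
    (hk : k ∈ Icc (-(s : ℤ)) s) (hk' : k' ∈ Icc (-(s : ℤ)) s) :
    ∑ m : Fin n, fourierVec n (-k') m * fourierVec n k m = if k' = k then (n : ℂ) else 0 := by
  classical
  have hn0 : n ≠ 0 := by omega
  have hterm : ∀ m : Fin n, fourierVec n (-k') m * fourierVec n k m
      = (unitRoot n ^ (k - k')) ^ (m : ℕ) := by
    intro m
    simp only [fourierVec, ← zpow_add₀ (unitRoot_ne_zero n), ← zpow_natCast, ← _root_.zpow_mul]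
    ring_nf
  simp_rw [hterm, Fin.sum_univ_eq_sum_range (fun m => (unitRoot n ^ (k - k')) ^ m),
    geom_sum_eq_ite_of_pow_eq_one (unitRoot_zpow_pow_self n _),
    (isPrimitiveRoot_unitRoot hn0).zpow_eq_one_iff_dvd, hn, intCast_dvd_sub_iff_of_mem_Icc hk hk']

theorem neg_one_zpow_div_two_mul_inv_sin (hn : n = 2 * s + 1) {d : ℤ} (hd : ¬ (n : ℤ) ∣ d) :
    (-1 : ℂ) ^ d / 2 * (Real.sin (d * π / n) : ℂ)⁻¹
      = Complex.I / n * ∑ k ∈ Icc (-(s : ℤ)) s, (k : ℂ) * (unitRoot n ^ d) ^ k := by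
  have hζ := isPrimitiveRoot_unitRoot (n := n) (by omega)
  have hn0 : (n : ℂ) ≠ 0 := by exact_mod_cast (show n ≠ 0 by omega)
  set x := unitRoot n ^ d with hx_def
  have hxn : x ^ (2 * s + 1) = 1 := by rw [← hn]; exact unitRoot_zpow_pow_self n d
  have hx1 : x ≠ 1 := fun h => hd ((hζ.zpow_eq_one_iff_dvd d).1 h)
  have hS : ∑ k ∈ Icc (-(s : ℤ)) s, (k : ℂ) * x ^ k = n * x ^ (-(s : ℤ)) / (x - 1) := by
    rw [eq_div_iff (sub_ne_zero.2 hx1), mul_comm, sub_one_mul_sum_Icc_neg_mul_zpow hxn hx1, hn]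
  set η := Complex.exp (π * Complex.I * d / n) with hη_def
  have hη0 : η ≠ 0 := Complex.exp_ne_zero _
  have hη2 : x = η ^ 2 := by
    rw [hx_def, unitRoot, ← Complex.exp_int_mul, hη_def, ← Complex.exp_nat_mul]
    congr 1; push_cast; ring
  have hηn : (-1 : ℂ) ^ d = η ^ (2 * s + 1) := by
    rw [← hn, hη_def, ← Complex.exp_nat_mul, ← Complex.exp_pi_mul_I, ← Complex.exp_int_mul]
    congr 1; field_simp
  have hsin : (Real.sin (d * π / n) : ℂ) = (η⁻¹ - η) * Complex.I / 2 := by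
    rw [Complex.ofReal_sin, Complex.sin, hη_def, ← Complex.exp_neg]
    push_cast; ring_nf
  have hη21 : η ^ 2 - 1 ≠ 0 := by rw [← hη2]; exact sub_ne_zero.2 hx1
  have hη21' : 1 - η ^ 2 ≠ 0 := by rw [← neg_sub]; exact neg_ne_zero.2 hη21
  rw [hS, hηn, hsin, hη2, _root_.zpow_neg, zpow_natCast]
  rw [hη2] at hxn
  field_simp
  linear_combination (η ^ 2 - 1) * hxn + (η ^ 2 - 1) * Complex.I_sq

theorem specDC_apply_eq_sum (hn : n = 2 * s + 1) (j m : Fin n) :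
    specDC n j m = Complex.I / n *
      ∑ k ∈ Icc (-(s : ℤ)) s, (k : ℂ) * fourierVec n k j * fourierVec n (-k) m := by
  rw [specDC, of_apply]
  split_ifs with hjm
  · subst hjm
    simp only [fourierVec, neg_mul, _root_.zpow_neg, mul_assoc,
      mul_inv_cancel₀ (zpow_ne_zero _ (unitRoot_ne_zero n)), mul_one, sum_Icc_neg_intCast, mul_zero]
  · have hd : ¬ (n : ℤ) ∣ (j : ℤ) - m := by rwa [Fin.intCast_dvd_val_sub_val_iff, eq_comm]
    rw [show (j : ℝ) - m = (((j : ℤ) - m : ℤ) : ℝ) by push_cast; ring,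
      neg_one_zpow_div_two_mul_inv_sin hn hd]
    congr 1
    refine sum_congr rfl fun k _ => ?_
    simp only [fourierVec, mul_assoc, ← zpow_add₀ (unitRoot_ne_zero n), ← _root_.zpow_mul]
    ring_nf

theorem specDC_mulVec_fourierVec (hn : n = 2 * s + 1) {k : ℤ} (hk : k ∈ Icc (-(s : ℤ)) s) :
    specDC n *ᵥ fourierVec n k = (Complex.I * k) • fourierVec n k := by
  have hn0 : (n : ℂ) ≠ 0 := by exact_mod_cast (show n ≠ 0 by omega)
  funext j
  calc ∑ m, specDC n j m * fourierVec n k m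
      = Complex.I / n * ∑ k' ∈ Icc (-(s : ℤ)) s, (k' : ℂ) * fourierVec n k' j *
          ∑ m, fourierVec n (-k') m * fourierVec n k m := by
        simp_rw [specDC_apply_eq_sum hn, mul_sum, sum_mul]
        rw [sum_comm]
        exact sum_congr rfl fun _ _ => sum_congr rfl fun _ _ => by ring
    _ = Complex.I / n * ∑ k' ∈ Icc (-(s : ℤ)) s,
          (k' : ℂ) * fourierVec n k' j * if k' = k then (n : ℂ) else 0 := by
        congr 1
        exact sum_congr rfl fun k' hk' => by
          rw [sum_univ_fourierVec_neg_mul_fourierVec hn hk hk']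
    _ = (Complex.I * k) * fourierVec n k j := by
        simp only [mul_ite, mul_zero, sum_ite_eq', hk, if_true]
        field_simp

theorem fourierVec_vecMul_specDC (hn : n = 2 * s + 1) {k : ℤ} (hk : k ∈ Icc (-(s : ℤ)) s) :
    fourierVec n k ᵥ* specDC n = (-(Complex.I * k)) • fourierVec n k := by
  rw [← mulVec_transpose, specDC_transpose, neg_mulVec, specDC_mulVec_fourierVec hn hk, neg_smul]

end OddSize

section KroneckerSumOfSpecDC

variable {n₁ n₂ s₁ s₂ : ℕ}

theorem mode_dotProduct_eq_zero_of_mulVec_eq_zero (hs₁ : n₁ = 2 * s₁ + 1)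
    (hs₂ : n₂ = 2 * s₂ + 1) {ω₁ ω₂ : ℝ} {k₁ k₂ : ℤ} (hk₁ : k₁ ∈ Icc (-(s₁ : ℤ)) s₁)
    (hk₂ : k₂ ∈ Icc (-(s₂ : ℤ)) s₂) (hω : (k₁ : ℝ) * ω₁ + k₂ * ω₂ ≠ 0)
    {v : Fin n₂ × Fin n₁ → ℂ}
    (hv : ((ω₁ : ℂ) • ((1 : Matrix (Fin n₂) (Fin n₂) ℂ) ⊗ₖ specDC n₁)
      + (ω₂ : ℂ) • (specDC n₂ ⊗ₖ (1 : Matrix (Fin n₁) (Fin n₁) ℂ))) *ᵥ v = 0) :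
    (fun m => fourierVec n₂ k₂ m.1 * fourierVec n₁ k₁ m.2) ⬝ᵥ v = 0 := by
  refine dotProduct_eq_zero_of_vecMul_eq_smul (mul_vecMul_kroneckerSum_of_vecMul_eq_smul _ _
    (fourierVec_vecMul_specDC hs₁ hk₁) (fourierVec_vecMul_specDC hs₂ hk₂)) ?_ hv
  have : (ω₁ : ℂ) * -(Complex.I * k₁) + ω₂ * -(Complex.I * k₂)
      = -Complex.I * (((k₁ : ℝ) * ω₁ + k₂ * ω₂ : ℝ) : ℂ) := by push_cast; ring
  rw [this]
  exact mul_ne_zero (neg_ne_zero.2 Complex.I_ne_zero) (Complex.ofReal_ne_zero.2 hω)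

theorem eq_inv_mul_sum_mode_mul_dotProduct (hs₁ : n₁ = 2 * s₁ + 1) (hs₂ : n₂ = 2 * s₂ + 1)
    (v : Fin n₂ × Fin n₁ → ℂ) (p : Fin n₂ × Fin n₁) :
    v p = ((n₂ : ℂ) * n₁)⁻¹ * ∑ k ∈ Icc (-(s₂ : ℤ)) s₂ ×ˢ Icc (-(s₁ : ℤ)) s₁,
      fourierVec n₂ (-k.1) p.1 * fourierVec n₁ (-k.2) p.2 *
        ((fun m => fourierVec n₂ k.1 m.1 * fourierVec n₁ k.2 m.2) ⬝ᵥ v) := by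
  have hN : ((n₂ : ℂ) * n₁) ≠ 0 := by
    rw [hs₁, hs₂]; exact mul_ne_zero (by norm_cast) (by norm_cast)
  exact eq_inv_mul_sum_mul_dotProduct _ _ _ hN (sum_product_mul_mul_eq_ite _ _ _ _ _ _
    (sum_Icc_fourierVec_neg_mul_fourierVec hs₁) (sum_Icc_fourierVec_neg_mul_fourierVec hs₂)) v p

end KroneckerSumOfSpecDC

theorem stmt_10_general (ω₁ ω₂ : ℝ)
    (hindep : ∀ k₁ k₂ : ℤ, (k₁ : ℝ) * ω₁ + (k₂ : ℝ) * ω₂ = 0 → k₁ = 0 ∧ k₂ = 0)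
    (n₁ n₂ : ℕ) (hodd₁ : Odd n₁) (hodd₂ : Odd n₂) :
    ∀ v : Fin n₂ × Fin n₁ → ℂ,
      ((ω₁ : ℂ) • ((1 : Matrix (Fin n₂) (Fin n₂) ℂ) ⊗ₖ specDC n₁)
        + (ω₂ : ℂ) • (specDC n₂ ⊗ₖ (1 : Matrix (Fin n₁) (Fin n₁) ℂ))).mulVec v = 0
      ↔ ∃ c : ℂ, v = fun _ => c := by
  intro v
  obtain ⟨s₁, hs₁⟩ := hodd₁
  obtain ⟨s₂, hs₂⟩ := hodd₂
  constructor
  · intro hv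
    refine ⟨((n₂ : ℂ) * n₁)⁻¹ * ∑ m, v m, funext fun p => ?_⟩
    rw [eq_inv_mul_sum_mode_mul_dotProduct hs₁ hs₂ v p, sum_eq_single_of_mem 0 (by simp) ?_]
    · simp [fourierVec_zero, dotProduct]
    rintro ⟨k₂, k₁⟩ hk hk0
    rw [mem_product] at hk
    have hω : (k₁ : ℝ) * ω₁ + k₂ * ω₂ ≠ 0 := fun h => hk0 (by
      obtain ⟨rfl, rfl⟩ := hindep k₁ k₂ h; rfl)
    rw [mode_dotProduct_eq_zero_of_mulVec_eq_zero hs₁ hs₂ hk.2 hk.1 hω hv, mul_zero]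
  · rintro ⟨c, rfl⟩
    have hconst : (fun _ => c) = c • fun m : Fin n₂ × Fin n₁ =>
        fourierVec n₂ 0 m.1 * fourierVec n₁ 0 m.2 := by
      funext m; simp [fourierVec_zero]
    rw [hconst, mulVec_smul, kroneckerSum_mulVec_mul_of_mulVec_eq_smul _ _
      (specDC_mulVec_fourierVec hs₁ (by simp)) (specDC_mulVec_fourierVec hs₂ (by simp))]
    simp

theorem stmt_10 (ω₁ ω₂ : ℝ) (h₁ : 0 < ω₁) (h₂ : 0 < ω₂)
    (hindep : ∀ k₁ k₂ : ℤ, (k₁ : ℝ) * ω₁ + (k₂ : ℝ) * ω₂ = 0 → k₁ = 0 ∧ k₂ = 0)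
    (n₁ n₂ : ℕ) (hodd₁ : Odd n₁) (hodd₂ : Odd n₂) (hn₁ : 3 ≤ n₁) (hn₂ : 3 ≤ n₂) :
    ∀ v : Fin n₂ × Fin n₁ → ℂ,
      ((ω₁ : ℂ) • ((1 : Matrix (Fin n₂) (Fin n₂) ℂ) ⊗ₖ specDC n₁)
        + (ω₂ : ℂ) • (specDC n₂ ⊗ₖ (1 : Matrix (Fin n₁) (Fin n₁) ℂ))).mulVec v = 0
      ↔ ∃ c : ℂ, v = fun _ => c :=
  stmt_10_general ω₁ ω₂ hindep n₁ n₂ hodd₁ hodd₂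
end

section
/- Let r : ℝ^N → ℝ^N be continuously differentiable, let v̂ ∈ ℝ^N, and suppose the Jacobian J = Dr(v̂) satisfies ‖Jz‖ ≥ c₀‖z‖ for all z, and that Dr is Lipschitz with constant L on the ball B(v̂, δ) where δ = c₀/(2L). If ‖r(v̂)‖ ≤ c₀δ/2, then there exists a unique q̂ ∈ B(v̂, δ) with r(q̂) = 0, and it satisfies ‖q̂ − v̂‖ ≤ (2/c₀)‖r(v̂)‖. -/
/-!
Since `Dr` is `L`-Lipschitz, on the ball `B(v̂, δ)` the map `r` differs from its linearization
`J = Dr(v̂)` by a map with Lipschitz constant `Lδ = c₀/2`. As `J` is bounded below by `c₀`, `r` is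
then bounded below by `c₀ - c₀/2` on differences, which gives uniqueness, and the quantitative
inverse function theorem (`ApproximatesLinearOn.surjOn_closedBall_of_nonlinearRightInverse`) maps
`B(v̂, ε)` onto a ball of radius `(c₀/2) ε` around `r(v̂)`; the choice `ε = (2/c₀)‖r(v̂)‖ ≤ δ`
makes that ball contain `0`.
-/

open Metric Set

open scoped NNReal

section LowerBound

variable {𝕜 : Type*} [NontriviallyNormedField 𝕜]
  {E F : Type*} [NormedAddCommGroup E] [NormedSpace 𝕜 E] [NormedAddCommGroup F] [NormedSpace 𝕜 F]

noncomputable def ContinuousLinearMap.nonlinearRightInverseOfLowerBound (f : E →L[𝕜] F)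
    (hsurj : Function.Surjective f) {c : ℝ≥0} (hc : 0 < c) (hbelow : ∀ z, c * ‖z‖ ≤ ‖f z‖) :
    f.NonlinearRightInverse where
  toFun := Function.surjInv hsurj
  nnnorm := c⁻¹
  bound' y := by
    rw [NNReal.coe_inv, inv_mul_eq_div, le_div_iff₀' (NNReal.coe_pos.mpr hc)]
    simpa only [Function.surjInv_eq hsurj y] using hbelow (Function.surjInv hsurj y)
  right_inv' := Function.surjInv_eq hsurj

theorem ContinuousLinearMap.injective_of_lowerBound {f : E →L[𝕜] F} {c : ℝ} (hc : 0 < c)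
    (hbelow : ∀ z, c * ‖z‖ ≤ ‖f z‖) : Function.Injective f := by
  refine (injective_iff_map_eq_zero f).mpr fun z hz => norm_le_zero_iff.mp ?_
  have := hbelow z
  rw [hz, norm_zero] at this
  exact nonpos_of_mul_nonpos_right this hc

theorem ContinuousLinearMap.surjective_of_lowerBound [FiniteDimensional 𝕜 E] {f : E →L[𝕜] E}
    {c : ℝ} (hc : 0 < c) (hbelow : ∀ z, c * ‖z‖ ≤ ‖f z‖) : Function.Surjective f :=
  LinearMap.injective_iff_surjective.mp (f.injective_of_lowerBound hc hbelow)

theorem ApproximatesLinearOn.mul_norm_sub_le_norm_sub {f : E → F} {f' : E →L[𝕜] F} {s : Set E}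
    {c : ℝ≥0} (hf : ApproximatesLinearOn f f' s c) {C : ℝ} (hbelow : ∀ z, C * ‖z‖ ≤ ‖f' z‖)
    {x y : E} (hx : x ∈ s) (hy : y ∈ s) : (C - c) * ‖x - y‖ ≤ ‖f x - f y‖ := by
  have hdiff : ‖f' (x - y)‖ ≤ ‖f x - f y‖ + ‖f x - f y - f' (x - y)‖ := by
    simpa only [norm_sub_rev (f' (x - y))] using norm_le_norm_add_norm_sub' (f' (x - y)) (f x - f y)
  linarith [hbelow (x - y), hf x hx y hy]

theorem ApproximatesLinearOn.injOn_of_lowerBound {f : E → F} {f' : E →L[𝕜] F} {s : Set E}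
    {c : ℝ≥0} (hf : ApproximatesLinearOn f f' s c) {C : ℝ} (hbelow : ∀ z, C * ‖z‖ ≤ ‖f' z‖)
    (hc : c < C) : InjOn f s := by
  intro x hx y hy hxy
  have := hf.mul_norm_sub_le_norm_sub hbelow hx hy
  rw [hxy, sub_self, norm_zero] at this
  exact sub_eq_zero.mp (norm_le_zero_iff.mp (nonpos_of_mul_nonpos_right this (sub_pos.mpr hc)))

end LowerBound

theorem Convex.approximatesLinearOn_of_norm_hasFDerivWithin_sub_le {E F : Type*}
    [NormedAddCommGroup E] [NormedSpace ℝ E] [NormedAddCommGroup F] [NormedSpace ℝ F]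
    {f : E → F} {f' : E → E →L[ℝ] F} {A : E →L[ℝ] F} {s : Set E} {c : ℝ≥0} (hs : Convex ℝ s)
    (hf : ∀ x ∈ s, HasFDerivWithinAt f (f' x) s x) (bound : ∀ x ∈ s, ‖f' x - A‖ ≤ c) :
    ApproximatesLinearOn f A s c :=
  fun x hx y hy => hs.norm_image_sub_le_of_norm_hasFDerivWithin_le' hf bound hy hx

theorem stmt_17 {E : Type*} [NormedAddCommGroup E] [NormedSpace ℝ E]
    [FiniteDimensional ℝ E]
    (r : E → E) (hr : ContDiff ℝ 1 r) (vhat : E)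
    (c₀ L δ : ℝ) (hc₀ : 0 < c₀) (hL : 0 < L) (hδ : δ = c₀ / (2 * L))
    (hstab : ∀ z : E, c₀ * ‖z‖ ≤ ‖fderiv ℝ r vhat z‖)
    (hlip : ∀ x ∈ closedBall vhat δ, ∀ y ∈ closedBall vhat δ,
      ‖fderiv ℝ r x - fderiv ℝ r y‖ ≤ L * ‖x - y‖)
    (hres : ‖r vhat‖ ≤ c₀ * δ / 2) :
    ∃ qhat ∈ closedBall vhat δ, r qhat = 0 ∧
      ‖qhat - vhat‖ ≤ (2 / c₀) * ‖r vhat‖ ∧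
      ∀ q' ∈ closedBall vhat δ, r q' = 0 → q' = qhat := by
  set J := fderiv ℝ r vhat
  have hLδ : L * δ = c₀ / 2 := by rw [hδ]; field_simp
  have hδ₀ : 0 ≤ δ := by rw [hδ]; positivity
  have happrox : ApproximatesLinearOn r J (closedBall vhat δ) ⟨c₀ / 2, by positivity⟩ := by
    refine (convex_closedBall vhat δ).approximatesLinearOn_of_norm_hasFDerivWithin_sub_le
      (fun x _ => ((hr.differentiable one_ne_zero x).hasFDerivAt).hasFDerivWithinAt) fun x hx => ?_
    calc ‖fderiv ℝ r x - J‖ ≤ L * ‖x - vhat‖ := hlip x hx vhat (mem_closedBall_self hδ₀)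
      _ ≤ L * δ := by gcongr; exact mem_closedBall_iff_norm.mp hx
      _ = c₀ / 2 := hLδ
  have hεδ : (2 / c₀) * ‖r vhat‖ ≤ δ := by
    rw [div_mul_eq_mul_div, div_le_iff₀ hc₀]; linarith
  let Jinv := J.nonlinearRightInverseOfLowerBound (J.surjective_of_lowerBound hc₀ hstab)
    (c := ⟨c₀, hc₀.le⟩) hc₀ hstab
  obtain ⟨qhat, hqε, hq⟩ := happrox.surjOn_closedBall_of_nonlinearRightInverse Jinv
    (by positivity) (closedBall_subset_closedBall hεδ) (show (0 : E) ∈ _ by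
      rw [mem_closedBall, dist_zero_left]
      change ‖r vhat‖ ≤ ((c₀⁻¹)⁻¹ - c₀ / 2) * ((2 / c₀) * ‖r vhat‖)
      field_simp; linarith)
  refine ⟨qhat, closedBall_subset_closedBall hεδ hqε, hq, mem_closedBall_iff_norm.mp hqε,
    fun q' hq' hrq' => ?_⟩
  exact happrox.injOn_of_lowerBound hstab (by change c₀ / 2 < c₀; linarith) hq'
    (closedBall_subset_closedBall hεδ hqε) (hrq'.trans hq.symm)
end
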